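/- arXiv:2012.05123 — 2 statements merged into one kernel-verified Lean document; each statement's English description precedes it below -/
import Mathlib

section
/- Let (M,u) be a strongly recursive causal model with context u, let X⃗ be a set of endogenous variables with E ∉ X⃗, and let x⃗ be a setting of X⃗. Then X⃗=x⃗ is sufficient for E=e w.r.t. (M,u) if and only if for all settings y⃗ of the endogenous variables Y⃗ = V − (X⃗ ∪ {E}), it holds that (M,u) ⊨ [X⃗←x⃗, Y⃗←y⃗] E=e. -/
/-!
Structural equation models (causal models) à la Pearl/Halpern, formalizing
Beckers' "The Counterfactual NESS Definition of Causation".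

A causal model over a context type `Ctx` (settings of the exogenous variables),
endogenous variables `V` and values `Val` consists of finite nonempty ranges
`R X`, structural equations `F X`, and a strong-recursiveness (acyclicity)
witness: an order `ord` such that `F X` only depends on variables of lower order.
-/

structure CausalModel (Ctx V Val : Type) where
  R : V → Finset Val
  R_nonempty : ∀ X, (R X).Nonempty
  F : V → Ctx → (V → Val) → Val
  ord : V → ℕ
  F_resp : ∀ X u s s', (∀ Y, ord Y < ord X → s Y = s' Y) → F X u s = F X u s'

namespace CausalModel

variable {Ctx V Val : Type}

/-- The unique solution of the equations in context `u` (it exists and is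
unique by strong recursiveness). `(M,u) ⊨ X = x` iff `M.sol u X = x`. -/
noncomputable def sol (M : CausalModel Ctx V Val) (u : Ctx) : V → Val :=
  fun X =>
    M.F X u (fun Y => if h : M.ord Y < M.ord X then M.sol u Y else (M.R_nonempty Y).choose)
termination_by X => M.ord X
decreasing_by exact h

/-- `M.sol u` indeed solves all the equations. -/
theorem sol_eq (M : CausalModel Ctx V Val) (u : Ctx) (X : V) :
    M.sol u X = M.F X u (M.sol u) := by
  rw [sol]
  exact M.F_resp X u _ _ (fun Y hY => dif_pos hY)

variable [DecidableEq V]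

/-- `X⃗ = x⃗` (given by the set `Xs` and the assignment `xs`) is sufficient for
`E = e` w.r.t. `(M, u)`: the equation for `E` outputs `e` on every setting of the
endogenous variables (in their ranges) that agrees with `xs` on `Xs`. -/
def Sufficient (M : CausalModel Ctx V Val) (u : Ctx) (Xs : Finset V) (xs : V → Val)
    (E : V) (e : Val) : Prop :=
  ∀ s : V → Val, (∀ Y, s Y ∈ M.R Y) → (∀ X ∈ Xs, s X = xs X) → M.F E u s = e

/-- The intervened model `M_{X⃗ ← x⃗}`: the equations of variables in `Xs` are
replaced by the constants given by `xs`. -/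
def intervene (M : CausalModel Ctx V Val) (Xs : Finset V) (xs : V → Val) :
    CausalModel Ctx V Val where
  R := M.R
  R_nonempty := M.R_nonempty
  F := fun X u s => if X ∈ Xs then xs X else M.F X u s
  ord := M.ord
  F_resp := by
    intro X u s s' h
    by_cases hX : X ∈ Xs
    · simp [hX]
    · simpa [hX] using M.F_resp X u s s' h

/-- `W⃗ = w⃗` (given by `Ws, ws`) is a witness for `C = c` directly NESS-causing
`E = e` w.r.t. `(M, u)`: `C = c` and `W⃗ = w⃗` actually hold, `{C = c} ∪ {W⃗ = w⃗}`
is sufficient for `E = e`, and `W⃗ = w⃗` alone is not. -/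
def DirectNESSWith (M : CausalModel Ctx V Val) (u : Ctx) (C : V) (c : Val) (E : V) (e : Val)
    (Ws : Finset V) (ws : V → Val) : Prop :=
  M.sol u C = c ∧ (∀ W ∈ Ws, M.sol u W = ws W) ∧
  M.Sufficient u (insert C Ws) (Function.update ws C c) E e ∧
  ¬ M.Sufficient u Ws ws E e

/-- `C = c` directly NESS-causes `E = e` w.r.t. `(M, u)`. -/
def DirectNESS (M : CausalModel Ctx V Val) (u : Ctx) (C : V) (c : Val) (E : V) (e : Val) :
    Prop :=
  ∃ (Ws : Finset V) (ws : V → Val), M.DirectNESSWith u C c E e Ws ws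

/-- `C = c` NESS-causes `E = e` along the path `p = (C₁, …, Cₙ)` w.r.t. `(M, u)`:
there are values `c₁, …, cₙ` such that `C = c` directly NESS-causes `C₁ = c₁`, …,
and `Cₙ = cₙ` directly NESS-causes `E = e`. (A direct NESS-cause is a NESS-cause
along the empty path.) -/
def NESSAlong (M : CausalModel Ctx V Val) (u : Ctx) (C : V) (c : Val) (p : List V)
    (E : V) (e : Val) : Prop :=
  ∃ cs : List Val, cs.length = p.length ∧
    List.Chain (fun a b => M.DirectNESS u a.1 a.2 b.1 b.2) (C, c) (p.zip cs ++ [(E, e)])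

/-- `C = c` NESS-causes `E = e` w.r.t. `(M, u)`: there is a chain of direct
NESS-causes from `C = c` to `E = e`. -/
def NESS (M : CausalModel Ctx V Val) (u : Ctx) (C : V) (c : Val) (E : V) (e : Val) : Prop :=
  ∃ p : List V, M.NESSAlong u C c p E e

/-- The BV definition: `C = c` NESS-causes `E = e` w.r.t. `(M, u)` and there is a
`c' ∈ R(C)` such that `C = c'` does not NESS-cause `E = e` w.r.t. `(M_{C ← c'}, u)`. -/
def BVCause (M : CausalModel Ctx V Val) (u : Ctx) (C : V) (c : Val) (E : V) (e : Val) :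
    Prop :=
  M.NESS u C c E e ∧
    ∃ c' ∈ M.R C, ¬ (M.intervene {C} (fun _ => c')).NESS u C c' E e

/-- The CNESS definition: `C = c` NESS-causes `E = e` along some path `p` w.r.t.
`(M, u)` and there is a `c' ∈ R(C)` such that `C = c'` does not NESS-cause `E = e`
along any subpath of `p` (a path all of whose variables are in `p`) w.r.t.
`(M_{C ← c'}, u)`. -/
def CNESSCause (M : CausalModel Ctx V Val) (u : Ctx) (C : V) (c : Val) (E : V) (e : Val) :
    Prop :=
  ∃ p : List V, M.NESSAlong u C c p E e ∧
    ∃ c' ∈ M.R C, ∀ p' : List V, (∀ X ∈ p', X ∈ p) →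
      ¬ (M.intervene {C} (fun _ => c')).NESSAlong u C c' p' E e

/-- `E = e` is counterfactually dependent on `C = c` w.r.t. `(M, u)`:
`(M,u) ⊨ C = c ∧ E = e` and there is a `c' ∈ R(C)` with `(M,u) ⊨ [C ← c'] ¬(E = e)`. -/
def CfDep (M : CausalModel Ctx V Val) (u : Ctx) (C : V) (c : Val) (E : V) (e : Val) : Prop :=
  M.sol u C = c ∧ M.sol u E = e ∧
    ∃ c' ∈ M.R C, (M.intervene {C} (fun _ => c')).sol u E ≠ e

/-- `E = e` is counterfactually dependent on `C = c` given the intervention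
`X⃗ ← x⃗`: in `M_{X⃗ ← x⃗}` with context `u`, `C = c` and `E = e` hold, and there is
a `c' ∈ R(C)` such that additionally intervening with `C ← c'` makes `E = e` false. -/
def CfDepGiven (M : CausalModel Ctx V Val) (u : Ctx) (Xs : Finset V) (xs : V → Val)
    (C : V) (c : Val) (E : V) (e : Val) : Prop :=
  (M.intervene Xs xs).sol u C = c ∧ (M.intervene Xs xs).sol u E = e ∧
    ∃ c' ∈ M.R C, ((M.intervene Xs xs).intervene {C} (fun _ => c')).sol u E ≠ e

/-- `Y` is a parent of `X`: the equation `F X` varies with the value of `Y`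
for some context and some setting (within the ranges) of the other variables. -/
def Parent (M : CausalModel Ctx V Val) (Y X : V) : Prop :=
  ∃ (u : Ctx) (s : V → Val) (y y' : Val),
    (∀ Z, s Z ∈ M.R Z) ∧ y ∈ M.R Y ∧ y' ∈ M.R Y ∧
    M.F X u (Function.update s Y y) ≠ M.F X u (Function.update s Y y')

end CausalModel

/-- **Proposition 1.** `X⃗ = x⃗` is sufficient for `E = e` w.r.t. `(M, u)`
iff for all settings `y⃗` of the endogenous variables `Y⃗ = V − (X⃗ ∪ {E})`,
`(M, u) ⊨ [X⃗ ← x⃗, Y⃗ ← y⃗] E = e` (where `E ∉ X⃗`). -/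
theorem sufficient_iff_all_interventions {Ctx V Val : Type} [DecidableEq V] [Fintype V]
    (M : CausalModel Ctx V Val) (u : Ctx) (Xs : Finset V) (xs : V → Val)
    (E : V) (e : Val) (hE : E ∉ Xs) (hxs : ∀ X ∈ Xs, xs X ∈ M.R X) :
    M.Sufficient u Xs xs E e ↔
      ∀ ys : V → Val, (∀ Y ∈ Finset.univ \ insert E Xs, ys Y ∈ M.R Y) →
        (M.intervene (Finset.univ \ {E}) (fun Z => if Z ∈ Xs then xs Z else ys Z)).sol u E
          = e := by
  have hsolZ : ∀ (c : V → Val) (Z : V), Z ≠ E →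
      (M.intervene (Finset.univ \ {E}) c).sol u Z = c Z := by
    intro c Z hZ
    rw [CausalModel.sol_eq]
    simp [CausalModel.intervene, hZ]
  have key : ∀ (c s : V → Val), (∀ Z, Z ≠ E → c Z = s Z) →
      (M.intervene (Finset.univ \ {E}) c).sol u E = M.F E u s := by
    intro c s hcs
    rw [CausalModel.sol_eq]
    have h1 : (M.intervene (Finset.univ \ {E}) c).F E u
        ((M.intervene (Finset.univ \ {E}) c).sol u)
        = M.F E u ((M.intervene (Finset.univ \ {E}) c).sol u) := by
      simp [CausalModel.intervene]
    rw [h1]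
    apply M.F_resp
    intro Y hY
    have hYE : Y ≠ E := fun h => by subst h; exact lt_irrefl _ hY
    rw [hsolZ c Y hYE, hcs Y hYE]
  constructor
  · intro hs ys hys
    set c : V → Val := fun Z => if Z ∈ Xs then xs Z else ys Z with hc
    set s : V → Val := Function.update c E (M.R_nonempty E).choose with hsdef
    have hk := key c s (fun Z hZ => (Function.update_of_ne hZ _ _).symm)
    rw [hk]
    apply hs
    · intro Y
      by_cases hYE : Y = E
      · subst hYE
        simp only [hsdef, Function.update_self]
        exact (M.R_nonempty Y).choose_spec
      · rw [hsdef, Function.update_of_ne hYE]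
        by_cases hYX : Y ∈ Xs
        · simpa [hc, hYX] using hxs Y hYX
        · have := hys Y (by simp [hYE, hYX])
          simpa [hc, hYX] using this
    · intro X hX
      have hXE : X ≠ E := fun h => hE (h ▸ hX)
      rw [hsdef, Function.update_of_ne hXE]
      simp [hc, hX]
  · intro h s hsR hsX
    have h2 := h s (fun Y _ => hsR Y)
    have hk := key (fun Z => if Z ∈ Xs then xs Z else s Z) s
      (by intro Z _; by_cases hZ : Z ∈ Xs <;> simp [hZ, hsX Z])
    rw [hk] at h2
    exact h2
end

section
/- If C=c directly NESS-causes E=e w.r.t. (M,u), then there exists a witness W⃗=w⃗ for this such that every variable in W⃗ is a parent of E. -/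
open Classical in
private lemma F_eq_of_nonparents {Ctx V Val : Type} [DecidableEq V]
    (M : CausalModel Ctx V Val) (u : Ctx) (E : V) (D : Finset V)
    (hD : ∀ Y ∈ D, ¬ M.Parent Y E) :
    ∀ s s' : V → Val, (∀ Y, s Y ∈ M.R Y) → (∀ Y, s' Y ∈ M.R Y) →
      (∀ Y, Y ∉ D → s Y = s' Y) → M.F E u s = M.F E u s' := by
  induction D using Finset.induction_on with
  | empty =>
    intro s s' _ _ hag
    have : s = s' := funext fun Y => hag Y (by simp)
    rw [this]
  | @insert a D ha ih =>
    intro s s' hs hs' hag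
    have hna : ¬ M.Parent a E := hD a (Finset.mem_insert_self a D)
    simp only [CausalModel.Parent, not_exists] at hna
    have h1 : M.F E u s = M.F E u (Function.update s a (s' a)) := by
      have := hna u s (s a) (s' a)
      push_neg at this
      have h2 := this hs (hs a) (hs' a)
      rwa [Function.update_eq_self] at h2
    rw [h1]
    refine ih (fun Y hY => hD Y (Finset.mem_insert_of_mem hY)) _ _ ?_ hs' ?_
    · intro Y
      rcases eq_or_ne Y a with rfl | hne
      · simpa using hs' Y
      · simpa [Function.update_of_ne hne] using hs Y
    · intro Y hY
      rcases eq_or_ne Y a with rfl | hne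
      · simp
      · rw [Function.update_of_ne hne]
        exact hag Y (by simp [hne, hY])

/-- **Proposition 2.** If `C = c` directly NESS-causes `E = e` w.r.t.
`(M, u)`, then there is a witness `W⃗ = w⃗` for this such that every variable in `W⃗`
is a parent of `E`. -/
theorem directNESS_witness_parents {Ctx V Val : Type} [DecidableEq V]
    (M : CausalModel Ctx V Val) (u : Ctx) (C : V) (c : Val) (E : V) (e : Val)
    (h : M.DirectNESS u C c E e) :
    ∃ (Ws : Finset V) (ws : V → Val),
      M.DirectNESSWith u C c E e Ws ws ∧ ∀ W ∈ Ws, M.Parent W E := by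
  classical
  obtain ⟨Ws, ws, hsolC, hsolW, hsuf, hnsuf⟩ := h
  -- a witness for non-sufficiency gives in-range values of ws on Ws
  have hrange : ∀ W ∈ Ws, ws W ∈ M.R W := by
    by_contra hcon
    push_neg at hcon
    obtain ⟨W, hW, hWr⟩ := hcon
    exact hnsuf (fun s hsr hag => absurd (hag W hW ▸ hsr W) hWr)
  set Ws' : Finset V := Ws.filter (fun W => M.Parent W E) with hWs'
  have hsub : Ws' ⊆ Ws := Finset.filter_subset _ _
  refine ⟨Ws', ws, ⟨hsolC, fun W hW => hsolW W (hsub hW), ?_, ?_⟩,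
    fun W hW => (Finset.mem_filter.mp hW).2⟩
  · -- sufficiency of {C} ∪ Ws'
    intro s hsr hag
    set s' : V → Val := fun Y => if Y ∈ Ws \ insert C Ws' then ws Y else s Y with hs'def
    have hs'r : ∀ Y, s' Y ∈ M.R Y := by
      intro Y
      simp only [hs'def]
      split
      · exact hrange Y (Finset.mem_sdiff.mp (by assumption)).1
      · exact hsr Y
    have hFs' : M.F E u s' = e := by
      refine hsuf s' hs'r ?_
      intro X hX
      rcases Finset.mem_insert.mp hX with rfl | hXW
      · have : s' X = s X := by
          simp [hs'def, Finset.mem_sdiff]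
        rw [this]
        exact hag X (Finset.mem_insert_self _ _)
      · by_cases hX' : X ∈ insert C Ws'
        · have : s' X = s X := by
            simp only [hs'def]
            rw [if_neg (by simp [Finset.mem_sdiff, hX'])]
          rw [this]
          exact hag X hX'
        · have hXC : X ≠ C := fun hh => hX' (hh ▸ Finset.mem_insert_self _ _)
          have : s' X = ws X := by
            simp only [hs'def]
            rw [if_pos (Finset.mem_sdiff.mpr ⟨hXW, hX'⟩)]
          rw [this, Function.update_of_ne hXC]
    rw [← hFs']
    refine F_eq_of_nonparents M u E (Ws \ insert C Ws') ?_ s s' hsr hs'r ?_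
    · intro Y hY
      obtain ⟨hY1, hY2⟩ := Finset.mem_sdiff.mp hY
      intro hp
      exact hY2 (Finset.mem_insert_of_mem (Finset.mem_filter.mpr ⟨hY1, hp⟩))
    · intro Y hY
      simp only [hs'def]
      rw [if_neg hY]
  · -- non-sufficiency of Ws'
    intro hsuf'
    exact hnsuf (fun s hsr hag => hsuf' s hsr (fun X hX => hag X (hsub hX)))
end
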